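/- Soundness of emptiness: if t empty holds (as a circular, i.e. coinductively interpreted, derivation), then for all step indices k and all values v, it is not the case that v ∈_k t. -/

import Mathlib

namespace CBPV

abbrev Label := String
abbrev Var := String

-- Positive types (values); `name` refers to an equirecursively defined type name.
mutual
inductive PosTp : Type where
  | name : String → PosTp
  | str  : PosStr → PosTp

/-- Structural positive types. -/
inductive PosStr : Type where
  | tensor : PosTp → PosTp → PosStr
  | one    : PosStr
  | plus   : List (Label × PosTp) → PosStr
  | down   : NegTp → PosStr

/-- Negative types (computations). -/
inductive NegTp : Type where
  | name : String → NegTp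
  | str  : NegStr → NegTp

/-- Structural negative types. -/
inductive NegStr : Type where
  | arrow   : PosTp → NegTp → NegStr
  | withRec : List (Label × NegTp) → NegStr
  | up      : PosTp → NegStr
end

mutual
/-- Values. -/
inductive Val : Type where
  | var   : Var → Val
  | pair  : Val → Val → Val
  | unit  : Val
  | inj   : Label → Val → Val
  | thunk : Comp → Val

/-- Computations. -/
inductive Comp : Type where
  | lam       : Var → Comp → Comp
  | app       : Comp → Val → Comp
  | record    : List (Label × Comp) → Comp
  | proj      : Comp → Label → Comp
  | ret       : Val → Comp
  | letret    : Var → Comp → Comp → Comp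
  | name      : String → Comp
  | matchPair : Val → Var → Var → Comp → Comp
  | matchUnit : Val → Comp → Comp
  | matchSum  : Val → List (Label × Var × Comp) → Comp
  | force     : Val → Comp
end

/-- A global signature: equirecursive (contractive) type definitions `t = τ⁺`,
`s = σ⁻`, and recursive expression definitions `f : σ⁻ = e`. -/
structure Signature : Type where
  pos  : String → PosStr
  neg  : String → NegStr
  defs : String → NegTp × Comp

mutual
/-- Substitution of value `w` for variable `x` in a value. -/
def substV (w : Val) (x : Var) : Val → Val
  | .var y => if y = x then w else .var y
  | .pair v₁ v₂ => .pair (substV w x v₁) (substV w x v₂)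
  | .unit => .unit
  | .inj j v => .inj j (substV w x v)
  | .thunk e => .thunk (substC w x e)

/-- Substitution of value `w` for variable `x` in a computation. -/
def substC (w : Val) (x : Var) : Comp → Comp
  | .lam y e => .lam y (if y = x then e else substC w x e)
  | .app e v => .app (substC w x e) (substV w x v)
  | .record L => .record (substRec w x L)
  | .proj e j => .proj (substC w x e) j
  | .ret v => .ret (substV w x v)
  | .letret y e₁ e₂ => .letret y (substC w x e₁) (if y = x then e₂ else substC w x e₂)
  | .name f => .name f
  | .matchPair v y z e =>
      .matchPair (substV w x v) y z (if y = x ∨ z = x then e else substC w x e)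
  | .matchUnit v e => .matchUnit (substV w x v) (substC w x e)
  | .matchSum v B => .matchSum (substV w x v) (substBr w x B)
  | .force v => .force (substV w x v)

def substRec (w : Val) (x : Var) : List (Label × Comp) → List (Label × Comp)
  | [] => []
  | (l, e) :: rest => (l, substC w x e) :: substRec w x rest

def substBr (w : Val) (x : Var) : List (Label × Var × Comp) → List (Label × Var × Comp)
  | [] => []
  | (l, y, e) :: rest =>
      (l, y, if y = x then e else substC w x e) :: substBr w x rest
end

/-- Terminal computations. -/
inductive Terminal : Comp → Prop where
  | lam    : Terminal (.lam x e)
  | record : Terminal (.record L)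
  | ret    : Terminal (.ret v)

/-- Small-step dynamics of call-by-push-value, relative to a signature. -/
inductive Step (Sg : Signature) : Comp → Comp → Prop where
  | beta       : Step Sg (.app (.lam x e) v) (substC v x e)
  | app        : Step Sg e e' → Step Sg (.app e v) (.app e' v)
  | letretBeta : Step Sg (.letret x (.ret v) e₂) (substC v x e₂)
  | letretStep : Step Sg e₁ e₁' → Step Sg (.letret x e₁ e₂) (.letret x e₁' e₂)
  | projBeta   : L.lookup j = some e → Step Sg (.proj (.record L) j) e
  | projStep   : Step Sg e e' → Step Sg (.proj e j) (.proj e' j)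
  | matchPair  : Step Sg (.matchPair (.pair v₁ v₂) x y e) (substC v₁ x (substC v₂ y e))
  | matchUnit  : Step Sg (.matchUnit .unit e) e
  | matchSum   : B.lookup j = some (x, ej) → Step Sg (.matchSum (.inj j v) B) (substC v x ej)
  | force      : Step Sg (.force (.thunk e)) e
  | name       : Sg.defs f = (σ, e) → Step Sg (.name f) e

end CBPV

namespace CBPV

/-- Unfold a positive type to a structural type using the signature
(equirecursive type definitions). -/
def unfP (Sg : Signature) : PosTp → PosStr
  | .name t => Sg.pos t
  | .str τ => τ

/-- Unfold a negative type to a structural type using the signature. -/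
def unfN (Sg : Signature) : NegTp → NegStr
  | .name s => Sg.neg s
  | .str σ => σ

/-- Step-indexed semantic typing of values against structural positive types,
parametrized by the semantic typing `SC` of computations (at the same index). -/
def SemValS (Sg : Signature) (SC : Comp → NegTp → Prop) : Val → PosStr → Prop
  | .pair v₁ v₂, .tensor τ₁ τ₂ =>
      SemValS Sg SC v₁ (unfP Sg τ₁) ∧ SemValS Sg SC v₂ (unfP Sg τ₂)
  | .unit, .one => True
  | .inj j v, .plus L => ∃ τ, L.lookup j = some τ ∧ SemValS Sg SC v (unfP Sg τ)
  | .thunk e, .down σ => SC e σ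
  | _, _ => False

mutual
/-- `SemComp Sg k e σ` is the step-indexed semantic typing `e ∈_k σ⁻`:
`e ∈_0 σ⁻` always, and `e ∈_{k+1} σ⁻` iff either `e ↦ e'` with `e' ∈_k σ⁻`,
or `e` is terminal and `e ∈⊛_{k+1} σ⁻`. -/
def SemComp (Sg : Signature) : ℕ → Comp → NegTp → Prop
  | 0, _, _ => True
  | k+1, e, σ =>
      (∃ e', Step Sg e e' ∧ SemComp Sg k e' σ) ∨
      (Terminal e ∧ SemTerm Sg (k+1) e σ)
termination_by k e σ => (k, 1)

/-- `SemTerm Sg (k+1) e σ` is the semantic typing `e ∈⊛_{k+1} σ⁻` of terminal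
computations.  Since applications `e v` and projections `e.j` are never
terminal, the requirements `e v ∈_{k+1} σ` and `e.j ∈_{k+1} σ_j` are stated in
their (equivalent) unfolded form: the application/projection takes a step to a
computation in the type at index `k`. -/
def SemTerm (Sg : Signature) : ℕ → Comp → NegTp → Prop
  | 0, _, _ => True
  | k+1, e, σ =>
      match unfN Sg σ with
      | .arrow τ σ₂ =>
          ∀ i, i ≤ k → ∀ v, SemValS Sg (SemComp Sg i) v (unfP Sg τ) →
            ∃ e'', Step Sg (.app e v) e'' ∧ SemComp Sg k e'' σ₂
      | .withRec K =>
          ∀ j σj, K.lookup j = some σj →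
            ∃ e'', Step Sg (.proj e j) e'' ∧ SemComp Sg k e'' σj
      | .up τ => ∃ v, e = .ret v ∧ SemValS Sg (SemComp Sg k) v (unfP Sg τ)
termination_by k e σ => (k, 0)
end

/-- `v ∈_k τ⁺`: step-indexed semantic typing of values. -/
def SemVal (Sg : Signature) (k : ℕ) (v : Val) (τ : PosTp) : Prop :=
  SemValS Sg (SemComp Sg k) v (unfP Sg τ)

/-- `v ∈ τ⁺`: semantic typing of values (at every step index). -/
def SemValAll (Sg : Signature) (v : Val) (τ : PosTp) : Prop :=
  ∀ k, SemVal Sg k v τ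

/-- `e ∈ σ⁻`: semantic typing of computations (at every step index). -/
def SemCompAll (Sg : Signature) (e : Comp) (σ : NegTp) : Prop :=
  ∀ k, SemComp Sg k e σ

end CBPV

namespace CBPV

def PosTp.IsName : PosTp → Prop := fun τ => ∃ t, τ = .name t
def NegTp.IsName : NegTp → Prop := fun σ => ∃ s, σ = .name s

/-- A structural positive type is in normal form if all of its components are
type names, and its label lists have no duplicate labels. -/
def PosStrNormal : PosStr → Prop
  | .tensor τ₁ τ₂ => τ₁.IsName ∧ τ₂.IsName
  | .one => True
  | .plus L => (∀ p ∈ L, (Prod.snd p).IsName) ∧ (L.map Prod.fst).Nodup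
  | .down σ => σ.IsName

def NegStrNormal : NegStr → Prop
  | .arrow τ σ => τ.IsName ∧ σ.IsName
  | .withRec L => (∀ p ∈ L, (Prod.snd p).IsName) ∧ (L.map Prod.fst).Nodup
  | .up τ => τ.IsName

/-- A signature is in normal form when every type definition alternates between
type names and structural types, i.e. the components of every defined
structural type are themselves type names. -/
def SigNormal (Sg : Signature) : Prop :=
  (∀ t, PosStrNormal (Sg.pos t)) ∧ (∀ s, NegStrNormal (Sg.neg s))

/-- One unfolding of the rules for the emptiness judgment `t empty`. -/
def EmptyUnf (Sg : Signature) (S : String → Prop) (t : String) : Prop :=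
  (∃ L, Sg.pos t = .plus L ∧
     ∀ p ∈ L, ∃ tj, Prod.snd p = PosTp.name tj ∧ S tj) ∨
  (∃ t₁ t₂, Sg.pos t = .tensor (.name t₁) (.name t₂) ∧ (S t₁ ∨ S t₂))

/-- `t empty`: the greatest fixed point (circular derivations) of the
emptiness rules. -/
def TpEmpty (Sg : Signature) (t : String) : Prop :=
  ∃ S : String → Prop, (∀ u, S u → EmptyUnf Sg S u) ∧ S t

/-- `s full`: `s = t₁ → s₂ ∈ Σ` with `t₁ empty`, or `s = &{} ∈ Σ`. -/
def TpFull (Sg : Signature) (s : String) : Prop :=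
  (∃ t₁ s₂, Sg.neg s = .arrow (.name t₁) (.name s₂) ∧ TpEmpty Sg t₁) ∨
  Sg.neg s = .withRec []

/-- One unfolding of the rules for positive subtyping `t ≤ u` between
positive type names. -/
def PosSubUnf (Sg : Signature) (P N : String → String → Prop) (t u : String) : Prop :=
  (∃ t₁ t₂ u₁ u₂, Sg.pos t = .tensor (.name t₁) (.name t₂) ∧
     Sg.pos u = .tensor (.name u₁) (.name u₂) ∧ P t₁ u₁ ∧ P t₂ u₂) ∨
  (Sg.pos t = .one ∧ Sg.pos u = .one) ∨
  (∃ L K, Sg.pos t = .plus L ∧ Sg.pos u = .plus K ∧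
     ∀ p ∈ L, ∃ tj, Prod.snd p = PosTp.name tj ∧
       (TpEmpty Sg tj ∨ ∃ uj, K.lookup (Prod.fst p) = some (PosTp.name uj) ∧ P tj uj)) ∨
  (∃ s r, Sg.pos t = .down (.name s) ∧ Sg.pos u = .down (.name r) ∧ N s r) ∨
  TpEmpty Sg t

/-- One unfolding of the rules for negative subtyping `s ≤ r` between
negative type names. -/
def NegSubUnf (Sg : Signature) (P N : String → String → Prop) (s r : String) : Prop :=
  (∃ t₁ s₂ u₁ r₂, Sg.neg s = .arrow (.name t₁) (.name s₂) ∧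
     Sg.neg r = .arrow (.name u₁) (.name r₂) ∧ P u₁ t₁ ∧ N s₂ r₂) ∨
  (∃ t u, Sg.neg s = .up (.name t) ∧ Sg.neg r = .up (.name u) ∧ P t u) ∨
  (∃ L K, Sg.neg s = .withRec L ∧ Sg.neg r = .withRec K ∧
     ∀ p ∈ K, ∃ rj, Prod.snd p = NegTp.name rj ∧
       ∃ sj, L.lookup (Prod.fst p) = some (NegTp.name sj) ∧ N sj rj) ∨
  (∃ t, Sg.neg s = .up (.name t) ∧ TpEmpty Sg t) ∨
  TpFull Sg r

/-- `t ≤ u`: syntactic subtyping between positive type names, interpreted as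
circular derivations (greatest fixed point of the subtyping rules). -/
def PosSub (Sg : Signature) (t u : String) : Prop :=
  ∃ P N : String → String → Prop,
    (∀ a b, P a b → PosSubUnf Sg P N a b) ∧
    (∀ a b, N a b → NegSubUnf Sg P N a b) ∧ P t u

/-- `s ≤ r`: syntactic subtyping between negative type names, interpreted as
circular derivations (greatest fixed point of the subtyping rules). -/
def NegSub (Sg : Signature) (s r : String) : Prop :=
  ∃ P N : String → String → Prop,
    (∀ a b, P a b → PosSubUnf Sg P N a b) ∧
    (∀ a b, N a b → NegSubUnf Sg P N a b) ∧ N s r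

end CBPV

theorem List.mem_of_lookup_eq_some {α β : Type*} [BEq α] [LawfulBEq α] {L : List (α × β)}
    {a : α} {b : β} (h : L.lookup a = some b) : (a, b) ∈ L := by
  induction L with
  | nil => simp at h
  | cons p L ih =>
    obtain ⟨a', b'⟩ := p
    by_cases ha : a = a'
    · subst ha
      simp_all
    · simp only [List.lookup_cons, beq_false_of_ne ha] at h
      exact List.mem_cons_of_mem _ (ih h)

namespace CBPV

-- Each emptiness rule reduces typing `v` at an `S`-type to typing a proper subvalue of `v` at
-- another `S`-type, so the finite value `v` cannot be typed at all.
theorem not_semValS_of_emptyUnf_closed {Sg : Signature} {S : String → Prop}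
    (hS : ∀ u, S u → EmptyUnf Sg S u) (SC : Comp → NegTp → Prop) :
    ∀ (v : Val) {t : String}, S t → ¬ SemValS Sg SC v (Sg.pos t)
  | v, t, ht, hv => by
    rcases hS t ht with ⟨L, hL, hsum⟩ | ⟨t₁, t₂, htensor, ht₁ | ht₂⟩
    · rw [hL] at hv
      cases v <;> simp only [SemValS] at hv
      obtain ⟨τ, hlookup, hvj⟩ := hv
      obtain ⟨tj, rfl, htj⟩ := hsum _ (List.mem_of_lookup_eq_some hlookup)
      exact not_semValS_of_emptyUnf_closed hS SC _ htj hvj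
    · rw [htensor] at hv
      cases v <;> simp only [SemValS] at hv
      exact not_semValS_of_emptyUnf_closed hS SC _ ht₁ hv.1
    · rw [htensor] at hv
      cases v <;> simp only [SemValS] at hv
      exact not_semValS_of_emptyUnf_closed hS SC _ ht₂ hv.2

/-- Soundness of emptiness: over a signature in normal form, if `t empty`
holds (as a circular, i.e. coinductively interpreted, derivation), then for
all step indices `k` and all values `v`, it is not the case that `v ∈_k t`. -/
theorem emptiness_sound (Sg : Signature) (hN : SigNormal Sg) (t : String)
    (h : TpEmpty Sg t) :
    ∀ (k : ℕ) (v : Val), ¬ SemVal Sg k v (.name t) := by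
  obtain ⟨S, hS, ht⟩ := h
  exact fun k v => not_semValS_of_emptyUnf_closed hS (SemComp Sg k) v ht

end CBPV
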